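/- Let ((S,E),delta) be a finite Markov chain with ell = |S| states, let T be a subset of S such that every state of S has a path in (S,E) to some state of T, and let alpha > 0 be the minimum positive transition probability min{delta(s,t) : (s,t) in E}. Then from every start state: the probability that T is reached within ell steps is at least alpha^ell; for every natural number k, the probability that T is not reached within k*ell steps is at most (1 - alpha^ell)^k; and T is reached with probability 1. -/

import Mathlib

open scoped ENNReal
open MeasureTheory

/-- A finite Markov chain: `E` gives the (nonempty) set of successors of each state
and `δ` is the probabilistic transition function, supported exactly on the edges. -/
structure MarkovChain (S : Type*) [Fintype S] [DecidableEq S] where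
  E : S → Finset S
  E_nonempty : ∀ s, (E s).Nonempty
  δ : S → S → ℝ≥0∞
  δ_sum : ∀ s, ∑ t, δ s t = 1
  δ_support : ∀ s t, δ s t ≠ 0 ↔ t ∈ E s

variable {S : Type*} [Fintype S] [DecidableEq S]

/-- Cylinder set of plays whose first coordinates are given by the list `l`. -/
def Cyl (l : List S) : Set (ℕ → S) := {ω | ∀ i : Fin l.length, ω i.val = l.get i}

/-- Sequences that visit some state of `T`. -/
def ReachEvent (T : Set S) : Set (ℕ → S) := {ω | ∃ i, ω i ∈ T}

/-- Sequences that visit some state of `T` within the first `j` steps. -/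
def ReachWithin (T : Set S) (j : ℕ) : Set (ℕ → S) := {ω | ∃ i ≤ j, ω i ∈ T}

namespace MarkovChain

/-- Probability that the chain follows the given finite sequence of states. -/
noncomputable def pathProb (M : MarkovChain S) : List S → ℝ≥0∞
  | [] => 1
  | [_] => 1
  | s :: t :: rest => M.δ s t * pathProb M (t :: rest)

/-- Probability that the chain started at `s` begins with the finite sequence `l`. -/
noncomputable def cylWeight (M : MarkovChain S) (s : S) : List S → ℝ≥0∞
  | [] => 1
  | t :: rest => if t = s then M.pathProb (t :: rest) else 0

open scoped Classical in
/-- `M.Pr s Φ` is the probability of the event `Φ ⊆ (ℕ → S)` for the chain started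
at `s`: it is the Kolmogorov (Carathéodory) outer measure generated by the cylinder
probabilities. -/
noncomputable def Pr (M : MarkovChain S) (s : S) (Φ : Set (ℕ → S)) : ℝ≥0∞ :=
  (OuterMeasure.ofFunction
    (fun A : Set (ℕ → S) =>
      if A = ∅ then 0 else ⨅ (l : List S) (_ : A = Cyl l), M.cylWeight s l)
    (by simp)) Φ

/-- There is a path from `s` to `t` in the graph of the chain. -/
def Reaches (M : MarkovChain S) (s t : S) : Prop :=
  Relation.ReflTransGen (fun a b => b ∈ M.E a) s t

end MarkovChain

set_option linter.unusedSectionVars false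
set_option linter.unusedVariables false

section Aux
open scoped Classical
namespace MarkovChain
variable (M : MarkovChain S)

noncomputable def seqProb : (n : ℕ) → S → (Fin n → S) → ℝ≥0∞
  | 0, _, _ => 1
  | n+1, u, f => M.δ u (f 0) * seqProb n (f 0) (fun i => f i.succ)

@[simp] lemma seqProb_zero (u : S) (f : Fin 0 → S) : M.seqProb 0 u f = 1 := rfl

lemma seqProb_succ (n : ℕ) (u : S) (f : Fin (n+1) → S) :
    M.seqProb (n+1) u f = M.δ u (f 0) * M.seqProb n (f 0) (fun i => f i.succ) := rfl

lemma seqProb_cons (n : ℕ) (u v : S) (g : Fin n → S) :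
    M.seqProb (n+1) u (Fin.cons v g) = M.δ u v * M.seqProb n v g := rfl

lemma seqProb_total (n : ℕ) (u : S) : ∑ f : Fin n → S, M.seqProb n u f = 1 := by
  induction n generalizing u with
  | zero => simp
  | succ n ih =>
    have h := Fintype.sum_equiv (Fin.consEquiv (fun _ : Fin (n+1) => S))
      (fun p => M.δ u p.1 * M.seqProb n p.1 p.2)
      (fun f => M.seqProb (n+1) u f)
      (fun p => (M.seqProb_cons n u p.1 p.2).symm)
    rw [← h, Fintype.sum_prod_type, ← M.δ_sum u]
    refine Finset.sum_congr rfl fun v _ => ?_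
    simp only
    rw [← Finset.mul_sum, ih v, mul_one]

lemma pathProb_eq_seqProb (l : List S) (u : S) :
    M.pathProb (u :: l) = M.seqProb l.length u l.get := by
  induction l generalizing u with
  | nil => simp [pathProb]
  | cons t r ih =>
    rw [pathProb, ih t]
    simp only [List.length_cons]
    rfl

def lastState : (n : ℕ) → S → (Fin n → S) → S
  | 0, u, _ => u
  | n+1, _, f => lastState n (f 0) (fun i => f i.succ)

lemma snoc_comp_succ {n : ℕ} (f : Fin (n+1) → S) (v : S) :
    (fun i : Fin (n+1) => (Fin.snoc f v : Fin (n+2) → S) i.succ)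
      = (Fin.snoc (fun i : Fin n => f i.succ) v : Fin (n+1) → S) := by
  funext i
  refine Fin.lastCases ?_ (fun j => ?_) i
  · simp
  · rw [Fin.succ_castSucc]
    simp only [Fin.snoc_castSucc]

lemma seqProb_snoc (n : ℕ) (u v : S) (f : Fin n → S) :
    M.seqProb (n+1) u (Fin.snoc f v)
      = M.seqProb n u f * M.δ (lastState n u f) v := by
  induction n generalizing u with
  | zero =>
    rw [seqProb_succ]
    have : (Fin.snoc f v : Fin 1 → S) 0 = v := by
      have : (0 : Fin 1) = Fin.last 0 := rfl
      rw [this, Fin.snoc_last]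
    simp [this, lastState]
  | succ n ih =>
    rw [seqProb_succ]
    have h0 : (Fin.snoc f v : Fin (n+2) → S) 0 = f 0 := by
      have : (0 : Fin (n+2)) = Fin.castSucc 0 := rfl
      rw [this, Fin.snoc_castSucc]
    rw [h0, snoc_comp_succ, ih]
    rw [seqProb_succ, lastState, mul_assoc]

lemma sum_restrict_succ (N n : ℕ) (hn : n ≤ N) (u : S) (P : (Fin n → S) → Prop) :
    ∑ g : Fin (N+1) → S,
      (if P (fun i => g (Fin.castLE (hn.trans (Nat.le_succ N)) i)) then M.seqProb (N+1) u g else 0)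
    = ∑ g : Fin N → S, (if P (fun i => g (Fin.castLE hn i)) then M.seqProb N u g else 0) := by
  have compat : ∀ p : S × (Fin N → S),
      (if P (fun i => p.2 (Fin.castLE hn i)) then M.seqProb N u p.2 * M.δ (lastState N u p.2) p.1 else 0)
      = (fun g : Fin (N+1) → S =>
          if P (fun i => g (Fin.castLE (hn.trans (Nat.le_succ N)) i)) then M.seqProb (N+1) u g else 0)
        ((Fin.snocEquiv (fun _ : Fin (N+1) => S)) p) := by
    intro p
    have he : (Fin.snocEquiv (fun _ : Fin (N+1) => S)) p = Fin.snoc p.2 p.1 := rfl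
    have hr : (fun i => (Fin.snoc p.2 p.1 : Fin (N+1) → S) (Fin.castLE (hn.trans (Nat.le_succ N)) i))
        = (fun i => p.2 (Fin.castLE hn i)) := by
      funext i
      have : (Fin.castLE (hn.trans (Nat.le_succ N)) i) = Fin.castSucc (Fin.castLE hn i) := by
        apply Fin.ext; rfl
      rw [this, Fin.snoc_castSucc]
    rw [he]
    simp only
    rw [hr, M.seqProb_snoc]
  have h := Fintype.sum_equiv (Fin.snocEquiv (fun _ : Fin (N+1) => S))
    (fun p : S × (Fin N → S) =>
      if P (fun i => p.2 (Fin.castLE hn i)) then M.seqProb N u p.2 * M.δ (lastState N u p.2) p.1 else 0)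
    (fun g : Fin (N+1) → S =>
      if P (fun i => g (Fin.castLE (hn.trans (Nat.le_succ N)) i)) then M.seqProb (N+1) u g else 0)
    compat
  rw [← h, Fintype.sum_prod_type_right]
  refine Finset.sum_congr rfl fun g _ => ?_
  simp only
  by_cases hP : P (fun i => g (Fin.castLE hn i))
  · simp only [if_pos hP, ← Finset.mul_sum, M.δ_sum, mul_one]
  · simp only [if_neg hP, Finset.sum_const_zero]

lemma sum_restrict (n : ℕ) (P : (Fin n → S) → Prop) :
    ∀ N (hn : n ≤ N) (u : S),
    (∑ g : Fin N → S, if P (fun i => g (Fin.castLE hn i)) then M.seqProb N u g else 0)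
    = ∑ f : Fin n → S, (if P f then M.seqProb n u f else 0) := by
  intro N hn
  induction N, hn using Nat.le_induction with
  | base =>
    intro u
    refine Finset.sum_congr rfl fun f _ => ?_
    have : (fun i => f (Fin.castLE le_rfl i)) = f := by
      funext i; exact congrArg f (Fin.ext rfl)
    rw [this]
  | succ N hN ih =>
    intro u
    rw [M.sum_restrict_succ N n hN u P]
    exact ih u

end MarkovChain

lemma cyl_nil_eq_univ : Cyl ([] : List S) = Set.univ := by
  ext ω; simp [Cyl]

noncomputable def extSeq (l : List S) (d : S) : ℕ → S :=
  fun j => if h : j < l.length then l.get ⟨j, h⟩ else d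

lemma extSeq_mem_cyl (l : List S) (d : S) : extSeq l d ∈ Cyl l := by
  intro i
  simp [extSeq, i.isLt]

lemma cyl_nonempty [Nonempty S] (l : List S) : (Cyl l).Nonempty :=
  ⟨extSeq l (Classical.arbitrary S), extSeq_mem_cyl l _⟩

lemma cyl_subset_cyl {l p : List S} (hl : l.length ≤ p.length) {ω₀ : ℕ → S}
    (h1 : ω₀ ∈ Cyl p) (h2 : ω₀ ∈ Cyl l) : Cyl p ⊆ Cyl l := by
  intro ω hω i
  have hi : (i : ℕ) < p.length := lt_of_lt_of_le i.2 hl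
  have e1 : ω i.val = p.get ⟨i, hi⟩ := hω ⟨i, hi⟩
  have e2 : ω₀ i.val = p.get ⟨i, hi⟩ := h1 ⟨i, hi⟩
  rw [e1, ← e2]
  exact h2 i

noncomputable def iteSum (c : Prop) (x : ℝ≥0∞) : ℝ≥0∞ := if c then x else 0

lemma iteSum_pos {c : Prop} {x : ℝ≥0∞} (h : c) : iteSum c x = x := if_pos h

lemma iteSum_neg {c : Prop} {x : ℝ≥0∞} (h : ¬c) : iteSum c x = 0 := if_neg h

lemma toIteSum {γ : Type*} (s : Finset γ) (p : γ → Prop) [DecidablePred p] (W : γ → ℝ≥0∞) :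
    (∑ x ∈ s, if p x then W x else 0) = ∑ x ∈ s, iteSum (p x) (W x) :=
  Finset.sum_congr rfl fun x _ => by unfold iteSum; congr

lemma iteSum_iteSum (a b : Prop) (x : ℝ≥0∞) :
    iteSum a (iteSum b x) = iteSum (a ∧ b) x := by
  by_cases ha : a <;> by_cases hb : b <;>
    simp [iteSum_pos, iteSum_neg, ha, hb, iteSum]

lemma sum_fiber {γ : Type*} [Fintype γ] (F : Finset ℕ) (φ : γ → ℕ)
    (hmaps : ∀ x, φ x ∈ F) (W : γ → ℝ≥0∞) :
    ∑ x, W x = ∑ i ∈ F, ∑ x, iteSum (φ x = i) (W x) := by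
  rw [Finset.sum_comm]
  refine Finset.sum_congr rfl fun x _ => ?_
  rw [Finset.sum_eq_single_of_mem (φ x) (hmaps x)
    (fun i _ hne => iteSum_neg fun h => hne h.symm)]
  exact (iteSum_pos rfl).symm

lemma sum_iteSum_le_filter_sum {γ : Type*} [Fintype γ] (p q : γ → Prop) [DecidablePred q]
    (h : ∀ x, p x → q x) (W : γ → ℝ≥0∞) :
    ∑ x, iteSum (p x) (W x) ≤ ∑ x ∈ Finset.univ.filter q, W x := by
  rw [Finset.sum_filter]
  refine Finset.sum_le_sum fun x _ => ?_
  by_cases hp : p x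
  · rw [iteSum_pos hp, if_pos (h x hp)]
  · rw [iteSum_neg hp]
    exact zero_le

namespace MarkovChain
variable (M : MarkovChain S)

lemma Pr_mono (s : S) {A B : Set (ℕ → S)} (h : A ⊆ B) : M.Pr s A ≤ M.Pr s B := by
  unfold Pr
  exact measure_mono h

lemma Pr_iUnion_le {ι : Type*} [Countable ι] (s : S) (A : ι → Set (ℕ → S)) :
    M.Pr s (⋃ i, A i) ≤ ∑' i, M.Pr s (A i) := by
  unfold Pr
  exact measure_iUnion_le A

lemma Pr_empty (s : S) : M.Pr s ∅ = 0 := by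
  unfold Pr
  exact measure_empty

lemma Pr_le_cylWeight [Nonempty S] (s : S) (l : List S) :
    M.Pr s (Cyl l) ≤ M.cylWeight s l := by
  unfold Pr
  refine le_trans (MeasureTheory.OuterMeasure.ofFunction_le (Cyl l)) ?_
  rw [if_neg (cyl_nonempty l).ne_empty]
  exact iInf₂_le l (rfl : Cyl l = Cyl l)

lemma Pr_le_one [Nonempty S] (s : S) (A : Set (ℕ → S)) : M.Pr s A ≤ 1 := by
  have h1 : M.Pr s A ≤ M.Pr s (Cyl ([] : List S)) := by
    refine M.Pr_mono s ?_
    rw [cyl_nil_eq_univ]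
    exact Set.subset_univ A
  exact h1.trans (M.Pr_le_cylWeight s [])

lemma sum_restrict' (n : ℕ) (P : (Fin n → S) → Prop) (N : ℕ) (hn : n ≤ N) (u : S) :
    (∑ g : Fin N → S, iteSum (P (fun i => g (Fin.castLE hn i))) (M.seqProb N u g))
    = ∑ f : Fin n → S, iteSum (P f) (M.seqProb n u f) :=
  M.sum_restrict n P N hn u

variable (T : Set S)

noncomputable def Afun : ℕ → S → ℝ≥0∞
  | 0, _ => 1
  | n+1, u => ∑ v, if v ∉ T then M.δ u v * Afun n v else 0

noncomputable def Hfun : ℕ → S → ℝ≥0∞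
  | 0, u => if u ∈ T then 1 else 0
  | n+1, u => if u ∈ T then 1 else ∑ v, M.δ u v * Hfun n v

lemma Hfun_mem (n : ℕ) (u : S) (hu : u ∈ T) : Hfun M T n u = 1 := by
  cases n <;> simp [Hfun, hu]

lemma Hfun_le_one (n : ℕ) (u : S) : Hfun M T n u ≤ 1 := by
  induction n generalizing u with
  | zero => rw [Hfun]; split <;> simp
  | succ n ih =>
    rw [Hfun]
    split
    · exact le_rfl
    · calc ∑ v, M.δ u v * Hfun M T n v ≤ ∑ v, M.δ u v * 1 :=
            Finset.sum_le_sum (fun v _ => mul_le_mul_right (ih v) _)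
        _ = 1 := by simpa using M.δ_sum u

lemma Afun_le_one (n : ℕ) (u : S) : Afun M T n u ≤ 1 := by
  induction n generalizing u with
  | zero => rw [Afun]
  | succ n ih =>
    rw [Afun]
    calc ∑ v, (if v ∉ T then M.δ u v * Afun M T n v else 0) ≤ ∑ v, M.δ u v := by
          refine Finset.sum_le_sum fun v _ => ?_
          split
          · exact le_trans (mul_le_mul_right (ih v) _) (by simp)
          · exact zero_le
      _ = 1 := M.δ_sum u

lemma Afun_add_Hfun (n : ℕ) (u : S) (hu : u ∉ T) :
    Afun M T n u + Hfun M T n u = 1 := by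
  induction n generalizing u with
  | zero => simp [Afun, Hfun, hu]
  | succ n ih =>
    rw [Afun, Hfun, if_neg hu, ← Finset.sum_add_distrib]
    rw [← M.δ_sum u]
    refine Finset.sum_congr rfl fun v _ => ?_
    by_cases hv : v ∈ T
    · rw [if_neg (by simp [hv]), Hfun_mem M T n v hv, zero_add, mul_one]
    · rw [if_pos hv, ← mul_add, ih v hv, mul_one]

lemma Afun_eq_sum (n : ℕ) (u : S) :
    Afun M T n u = ∑ f : Fin n → S,
      if (∀ i, f i ∉ T) then M.seqProb n u f else 0 := by
  induction n generalizing u with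
  | zero => simp [Afun]
  | succ n ih =>
    have compat : ∀ p : S × (Fin n → S),
        (if (p.1 ∉ T ∧ ∀ i, p.2 i ∉ T) then M.δ u p.1 * M.seqProb n p.1 p.2 else 0)
        = (fun f : Fin (n+1) → S => if (∀ i, f i ∉ T) then M.seqProb (n+1) u f else 0)
          ((Fin.consEquiv (fun _ : Fin (n+1) => S)) p) := by
      intro p
      simp only
      have he : ((Fin.consEquiv (fun _ : Fin (n+1) => S)) p : Fin (n+1) → S)
          = Fin.cons p.1 p.2 := rfl
      rw [he, M.seqProb_cons]
      refine if_congr ?_ rfl rfl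
      rw [Fin.forall_fin_succ]
      simp
    have h := Fintype.sum_equiv (Fin.consEquiv (fun _ : Fin (n+1) => S))
      (fun p : S × (Fin n → S) =>
        if (p.1 ∉ T ∧ ∀ i, p.2 i ∉ T) then M.δ u p.1 * M.seqProb n p.1 p.2 else 0)
      (fun f : Fin (n+1) → S => if (∀ i, f i ∉ T) then M.seqProb (n+1) u f else 0)
      compat
    rw [← h, Fintype.sum_prod_type, Afun]
    refine Finset.sum_congr rfl fun v _ => ?_
    by_cases hv : v ∉ T
    · rw [if_pos hv, ih v, Finset.mul_sum]
      refine Finset.sum_congr rfl fun g _ => ?_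
      simp [hv]
    · simp [hv]

lemma Hfun_eq_sum (n : ℕ) (u : S) :
    Hfun M T n u = ∑ f : Fin n → S,
      if (u ∈ T ∨ ∃ i, f i ∈ T) then M.seqProb n u f else 0 := by
  induction n generalizing u with
  | zero =>
    rw [Hfun]
    by_cases hu : u ∈ T <;> simp [hu]
  | succ n ih =>
    have compat : ∀ p : S × (Fin n → S),
        (if (u ∈ T ∨ p.1 ∈ T ∨ ∃ i, p.2 i ∈ T) then M.δ u p.1 * M.seqProb n p.1 p.2 else 0)
        = (fun f : Fin (n+1) → S =>
            if (u ∈ T ∨ ∃ i, f i ∈ T) then M.seqProb (n+1) u f else 0)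
          ((Fin.consEquiv (fun _ : Fin (n+1) => S)) p) := by
      intro p
      simp only
      have he : ((Fin.consEquiv (fun _ : Fin (n+1) => S)) p : Fin (n+1) → S)
          = Fin.cons p.1 p.2 := rfl
      rw [he, M.seqProb_cons]
      refine if_congr ?_ rfl rfl
      rw [Fin.exists_fin_succ]
      simp [or_assoc]
    have h := Fintype.sum_equiv (Fin.consEquiv (fun _ : Fin (n+1) => S))
      (fun p : S × (Fin n → S) =>
        if (u ∈ T ∨ p.1 ∈ T ∨ ∃ i, p.2 i ∈ T) then M.δ u p.1 * M.seqProb n p.1 p.2 else 0)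
      (fun f : Fin (n+1) → S =>
        if (u ∈ T ∨ ∃ i, f i ∈ T) then M.seqProb (n+1) u f else 0)
      compat
    rw [← h, Fintype.sum_prod_type, Hfun]
    by_cases hu : u ∈ T
    · rw [if_pos hu]
      have : ∀ v : S, ∀ g : Fin n → S,
          (if (u ∈ T ∨ v ∈ T ∨ ∃ i, g i ∈ T) then M.δ u v * M.seqProb n v g else 0)
          = M.δ u v * M.seqProb n v g := fun v g => if_pos (Or.inl hu)
      calc (1 : ℝ≥0∞) = ∑ v, M.δ u v := (M.δ_sum u).symm
        _ = ∑ v, ∑ g : Fin n → S,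
            (if (u ∈ T ∨ v ∈ T ∨ ∃ i, g i ∈ T) then M.δ u v * M.seqProb n v g else 0) := by
          refine Finset.sum_congr rfl fun v _ => ?_
          simp only [this, ← Finset.mul_sum, M.seqProb_total, mul_one]
    · rw [if_neg hu]
      refine Finset.sum_congr rfl fun v _ => ?_
      rw [ih v, Finset.mul_sum]
      refine Finset.sum_congr rfl fun g _ => ?_
      simp only [hu, false_or, mul_ite, mul_zero]

lemma Afun_block (n : ℕ) (c : ℝ≥0∞) (hc : ∀ v, v ∉ T → Afun M T n v ≤ c) :
    ∀ m, ∀ u, u ∉ T → Afun M T (m + n) u ≤ Afun M T m u * c := by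
  intro m
  induction m with
  | zero =>
    intro u hu
    rw [Nat.zero_add]
    have h0 : Afun M T 0 u = 1 := rfl
    rw [h0, one_mul]
    exact hc u hu
  | succ m ih =>
    intro u hu
    have he : m + 1 + n = (m + n) + 1 := by omega
    rw [he, Afun]
    have he2 : Afun M T (m+1) u * c
        = ∑ v, (if v ∉ T then M.δ u v * Afun M T m v else 0) * c := by
      rw [Afun, Finset.sum_mul]
    rw [he2]
    refine Finset.sum_le_sum fun v _ => ?_
    by_cases hv : v ∉ T
    · rw [if_pos hv, if_pos hv, mul_assoc]
      exact mul_le_mul_right (ih v hv) _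
    · simp [hv]

lemma Afun_pow (ℓ : ℕ) (c : ℝ≥0∞) (hbound : ∀ v, v ∉ T → Afun M T ℓ v ≤ c) :
    ∀ k, ∀ u, u ∉ T → Afun M T (k * ℓ) u ≤ c ^ k := by
  intro k
  induction k with
  | zero => intro u _; simp [Afun]
  | succ k ih =>
    intro u hu
    have he : (k + 1) * ℓ = k * ℓ + ℓ := by ring
    rw [he, pow_succ]
    exact le_trans (M.Afun_block T ℓ c hbound (k * ℓ) u hu)
      (mul_le_mul_left (ih u hu) c)

noncomputable def Rset : ℕ → Finset S
  | 0 => Finset.univ.filter (· ∈ T)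
  | n+1 => Rset n ∪ Finset.univ.filter (fun u => ∃ v ∈ M.E u, v ∈ Rset n)

lemma Rset_subset_succ (n : ℕ) : Rset M T n ⊆ Rset M T (n+1) := by
  rw [Rset]
  exact Finset.subset_union_left

lemma Rset_mono {m n : ℕ} (h : m ≤ n) : Rset M T m ⊆ Rset M T n := by
  induction n, h using Nat.le_induction with
  | base => exact subset_rfl
  | succ n _ ih => exact ih.trans (M.Rset_subset_succ T n)

lemma mem_Rset_of_reaches {u t : S} (ht : t ∈ T) (h : M.Reaches u t) :
    ∃ n, u ∈ Rset M T n := by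
  unfold Reaches at h
  induction h using Relation.ReflTransGen.head_induction_on with
  | refl => exact ⟨0, by simp [Rset, ht]⟩
  | head hstep _ ih =>
    obtain ⟨n, hn⟩ := ih
    refine ⟨n + 1, ?_⟩
    rw [Rset]
    refine Finset.mem_union_right _ ?_
    rw [Finset.mem_filter]
    exact ⟨Finset.mem_univ _, _, hstep, hn⟩

lemma Rset_stab {m : ℕ} (h : Rset M T m = Rset M T (m+1)) :
    ∀ n, Rset M T n ⊆ Rset M T m := by
  intro n
  induction n with
  | zero => exact M.Rset_mono T (Nat.zero_le m)
  | succ n ih =>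
    intro u hu
    rw [Rset] at hu
    rcases Finset.mem_union.1 hu with h1 | h2
    · exact ih h1
    · rw [h, Rset]
      refine Finset.mem_union_right _ ?_
      rw [Finset.mem_filter] at h2 ⊢
      obtain ⟨-, v, hvE, hv⟩ := h2
      exact ⟨Finset.mem_univ u, v, hvE, ih hv⟩

lemma mem_Rset_pred [Nonempty S] {u : S} {n : ℕ} (hT0 : ∃ t0, t0 ∈ T)
    (hu : u ∈ Rset M T n) : u ∈ Rset M T (Fintype.card S - 1) := by
  by_cases hstab : ∃ m, m ≤ Fintype.card S - 1 ∧ Rset M T m = Rset M T (m+1)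
  · obtain ⟨m, hm, h⟩ := hstab
    exact M.Rset_mono T hm (M.Rset_stab T h n hu)
  · push_neg at hstab
    have grow : ∀ m, m ≤ Fintype.card S - 1 → m + 1 ≤ (Rset M T m).card := by
      intro m
      induction m with
      | zero =>
        intro _
        obtain ⟨t0, ht0⟩ := hT0
        have : t0 ∈ Rset M T 0 := by simp [Rset, ht0]
        exact Finset.card_pos.2 ⟨t0, this⟩
      | succ m ih =>
        intro hm
        have h1 : Rset M T m ⊂ Rset M T (m+1) :=
          ssubset_of_subset_of_ne (M.Rset_subset_succ T m) (hstab m (by omega))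
        have := Finset.card_lt_card h1
        have := ih (by omega)
        omega
    have hcard : Fintype.card S ≤ (Rset M T (Fintype.card S - 1)).card := by
      have hpos : 1 ≤ Fintype.card S := Fintype.card_pos
      have := grow (Fintype.card S - 1) le_rfl
      omega
    have : Rset M T (Fintype.card S - 1) = Finset.univ :=
      Finset.eq_univ_of_card _
        (le_antisymm (Finset.card_le_univ _) (by simpa using hcard))
    rw [this]
    exact Finset.mem_univ u

lemma pow_le_Hfun (α : ℝ≥0∞) (hα1 : α ≤ 1)
    (hαle : ∀ u v, v ∈ M.E u → α ≤ M.δ u v) :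
    ∀ m, ∀ u, u ∈ Rset M T m → ∀ n, m ≤ n → α ^ n ≤ Hfun M T n u := by
  intro m
  induction m with
  | zero =>
    intro u hu n _
    have huT : u ∈ T := by simpa [Rset] using hu
    rw [M.Hfun_mem T n u huT]
    exact pow_le_one' hα1 n
  | succ m ih =>
    intro u hu n hn
    rw [Rset] at hu
    rcases Finset.mem_union.1 hu with h1 | h2
    · exact ih u h1 n (le_trans (Nat.le_succ m) hn)
    · rw [Finset.mem_filter] at h2
      obtain ⟨-, v, hvE, hv⟩ := h2
      obtain ⟨n', rfl⟩ : ∃ n', n = n' + 1 := ⟨n - 1, by omega⟩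
      by_cases huT : u ∈ T
      · rw [M.Hfun_mem T _ u huT]
        exact pow_le_one' hα1 _
      · rw [Hfun, if_neg huT]
        calc α ^ (n' + 1) = α * α ^ n' := by rw [pow_succ, mul_comm]
          _ ≤ M.δ u v * Hfun M T n' v :=
              mul_le_mul' (hαle u v hvE) (ih v hv n' (by omega))
          _ ≤ ∑ w, M.δ u w * Hfun M T n' w :=
              Finset.single_le_sum (f := fun w => M.δ u w * Hfun M T n' w)
                (fun _ _ => zero_le) (Finset.mem_univ v)

lemma Afun_le_one_sub {n : ℕ} {u : S} (hu : u ∉ T) {x : ℝ≥0∞}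
    (hx : x ≤ Hfun M T n u) : Afun M T n u ≤ 1 - x := by
  have hAH := M.Afun_add_Hfun T n u hu
  have hH1 : Hfun M T n u ≤ 1 := M.Hfun_le_one T n u
  have hne : Hfun M T n u ≠ ⊤ := (lt_of_le_of_lt hH1 ENNReal.one_lt_top).ne
  have hA : Afun M T n u = 1 - Hfun M T n u := ENNReal.eq_sub_of_add_eq hne hAH
  rw [hA]
  exact tsub_le_tsub_left hx 1

lemma pathProb_cons_ofFn (u : S) {m : ℕ} (f : Fin m → S) :
    M.pathProb (u :: List.ofFn f) = M.seqProb m u f := by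
  induction m generalizing u with
  | zero => simp [pathProb]
  | succ m ih =>
    rw [List.ofFn_succ, pathProb, ih (f 0), seqProb_succ]

lemma get_cons_ofFn (u : S) {N : ℕ} (g : Fin N → S) (j : ℕ) (hj : j < N)
    (h2 : j + 1 < (u :: List.ofFn g).length) :
    (u :: List.ofFn g).get ⟨j+1, h2⟩ = g ⟨j, hj⟩ := by
  have h3 : (u :: List.ofFn g).get ⟨j+1, h2⟩
      = (List.ofFn g).get ⟨j, by simpa using h2⟩ := rfl
  rw [h3, List.get_ofFn]
  exact congrArg g (Fin.ext rfl)

lemma mem_cyl_cons_ofFn {ω : ℕ → S} {s : S} {N : ℕ} {g : Fin N → S}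
    (h : ω ∈ Cyl (s :: List.ofFn g)) :
    ω 0 = s ∧ ∀ j (hj : j < N), ω (j+1) = g ⟨j, hj⟩ := by
  constructor
  · exact h ⟨0, by simp⟩
  · intro j hj
    have h2 : j + 1 < (s :: List.ofFn g).length := by simp; omega
    have h4 := h ⟨j+1, h2⟩
    rw [h4]
    exact get_cons_ofFn s g j hj h2

lemma mem_cyl_cons_ofFn_of (ω : ℕ → S) (m : ℕ) (h0 : ω 0 = ω 0) :
    ω ∈ Cyl (ω 0 :: List.ofFn (fun i : Fin m => ω (i.val + 1))) := by
  intro i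
  rcases i with ⟨j, hj⟩
  cases j with
  | zero => rfl
  | succ j =>
    have hjm : j < m := by simpa using hj
    exact (get_cons_ofFn (ω 0) (fun i : Fin m => ω (i.val + 1)) j hjm hj).symm

lemma Pr_avoid_le [Nonempty S] (s : S) (m : ℕ) :
    M.Pr s {ω : ℕ → S | ∀ i ≤ m, ω i ∉ T}
      ≤ if s ∈ T then 0 else Afun M T m s := by
  set C : S × (Fin m → S) → Set (ℕ → S) := fun p =>
    if (p.1 ∉ T ∧ ∀ i, p.2 i ∉ T) then Cyl (p.1 :: List.ofFn p.2) else ∅ with hC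
  have hsub : {ω : ℕ → S | ∀ i ≤ m, ω i ∉ T} ⊆ ⋃ p, C p := by
    intro ω hω
    refine Set.mem_iUnion.2 ⟨(ω 0, fun i : Fin m => ω (i.val + 1)), ?_⟩
    rw [hC]
    simp only
    rw [if_pos ⟨hω 0 (Nat.zero_le m), fun i => hω (i.val + 1) (by omega)⟩]
    exact mem_cyl_cons_ofFn_of ω m rfl
  calc M.Pr s {ω : ℕ → S | ∀ i ≤ m, ω i ∉ T}
      ≤ M.Pr s (⋃ p, C p) := M.Pr_mono s hsub
    _ ≤ ∑' p, M.Pr s (C p) := M.Pr_iUnion_le s C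
    _ ≤ ∑' p : S × (Fin m → S),
        (if (p.1 ∉ T ∧ ∀ i, p.2 i ∉ T) then M.cylWeight s (p.1 :: List.ofFn p.2) else 0) := by
        refine ENNReal.tsum_le_tsum fun p => ?_
        rw [hC]
        simp only
        split
        · exact M.Pr_le_cylWeight s _
        · rw [M.Pr_empty s]
    _ = ∑ p : S × (Fin m → S),
        (if (p.1 ∉ T ∧ ∀ i, p.2 i ∉ T) then M.cylWeight s (p.1 :: List.ofFn p.2) else 0) :=
        tsum_fintype _
    _ ≤ if s ∈ T then 0 else Afun M T m s := by
        rw [Fintype.sum_prod_type]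
        rw [Finset.sum_eq_single_of_mem s (Finset.mem_univ s) ?side]
        case side =>
          intro u _ hu
          refine Finset.sum_eq_zero fun g _ => ?_
          have : M.cylWeight s (u :: List.ofFn g) = 0 := by
            rw [cylWeight, if_neg hu]
          rw [this]
          split <;> rfl
        by_cases hs : s ∈ T
        · rw [if_pos hs]
          refine le_of_eq (Finset.sum_eq_zero fun g _ => ?_)
          rw [if_neg (by simp [hs])]
        · rw [if_neg hs, M.Afun_eq_sum T m s]
          refine le_of_eq (Finset.sum_congr rfl fun g _ => ?_)
          by_cases hg : ∀ i, g i ∉ T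
          · rw [if_pos ⟨hs, hg⟩, if_pos hg, cylWeight, if_pos rfl,
              M.pathProb_cons_ofFn s g]
          · rw [if_neg (by simp [hg]), if_neg hg]

lemma sum_subset_cyl_le [Nonempty S] (s : S) (N : ℕ) (l : List S)
    (hlen : l.length ≤ N + 1) :
    ∑ g ∈ Finset.univ.filter
        (fun g : Fin N → S => Cyl (s :: List.ofFn g) ⊆ Cyl l), M.seqProb N s g
      ≤ M.cylWeight s l := by
  cases l with
  | nil =>
    have h1 : M.cylWeight s [] = 1 := rfl
    rw [h1]
    calc ∑ g ∈ Finset.univ.filter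
          (fun g : Fin N → S => Cyl (s :: List.ofFn g) ⊆ Cyl []), M.seqProb N s g
        ≤ ∑ g : Fin N → S, M.seqProb N s g :=
          Finset.sum_le_sum_of_subset (Finset.filter_subset _ _)
      _ = 1 := M.seqProb_total N s
  | cons t r =>
    by_cases hts : t = s
    · subst hts
      have hrN : r.length ≤ N := by simpa using hlen
      have hsubfil : Finset.univ.filter
            (fun g : Fin N → S => Cyl (t :: List.ofFn g) ⊆ Cyl (t :: r))
          ⊆ Finset.univ.filter
            (fun g : Fin N → S => (fun i : Fin r.length => g (Fin.castLE hrN i)) = r.get) := by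
        intro g hg
        rw [Finset.mem_filter] at hg ⊢
        refine ⟨hg.1, ?_⟩
        have hsubc := hg.2
        have hω₀mem : extSeq (t :: List.ofFn g) t ∈ Cyl (t :: r) :=
          hsubc (extSeq_mem_cyl _ _)
        funext j
        have hj1 : (j.val : ℕ) + 1 < (t :: r).length := Nat.succ_lt_succ j.2
        have h1 : extSeq (t :: List.ofFn g) t (j.val + 1) = (t :: r).get ⟨j.val+1, hj1⟩ :=
          hω₀mem ⟨j.val + 1, hj1⟩
        have h2 : (t :: r).get ⟨j.val+1, hj1⟩ = r.get ⟨j.val, j.2⟩ := rfl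
        have hjN : (j.val : ℕ) < N := lt_of_lt_of_le j.2 hrN
        have h3 : extSeq (t :: List.ofFn g) t (j.val + 1) = g ⟨j.val, hjN⟩ :=
          (mem_cyl_cons_ofFn (extSeq_mem_cyl (t :: List.ofFn g) t)).2 j.val hjN
        have h4 : g (Fin.castLE hrN j) = g ⟨j.val, hjN⟩ := congrArg g (Fin.ext rfl)
        have h5 : r.get ⟨j.val, j.2⟩ = r.get j := congrArg r.get (Fin.ext rfl)
        rw [h4, ← h3, h1, h2, h5]
      have hW : M.cylWeight t (t :: r) = M.pathProb (t :: r) := by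
        rw [cylWeight, if_pos rfl]
      rw [hW, M.pathProb_eq_seqProb r t]
      calc ∑ g ∈ Finset.univ.filter
            (fun g : Fin N → S => Cyl (t :: List.ofFn g) ⊆ Cyl (t :: r)), M.seqProb N t g
          ≤ ∑ g ∈ Finset.univ.filter
            (fun g : Fin N → S => (fun i : Fin r.length => g (Fin.castLE hrN i)) = r.get),
              M.seqProb N t g := Finset.sum_le_sum_of_subset hsubfil
        _ = ∑ f : Fin r.length → S, (if f = r.get then M.seqProb r.length t f else 0) := by
            rw [Finset.sum_filter]
            refine Eq.trans (Eq.trans ?_ (M.sum_restrict r.length (fun f => f = r.get) N hrN t)) ?_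
            · refine Finset.sum_congr rfl fun g _ => ?_
              congr
            · refine Finset.sum_congr rfl fun f _ => ?_
              congr
        _ = M.seqProb r.length t r.get := by simp
    · have hW : M.cylWeight s (t :: r) = 0 := by rw [cylWeight, if_neg hts]
      rw [hW]
      have hempty : Finset.univ.filter
          (fun g : Fin N → S => Cyl (s :: List.ofFn g) ⊆ Cyl (t :: r)) = ∅ := by
        refine Finset.eq_empty_of_forall_notMem fun g hg => ?_
        rw [Finset.mem_filter] at hg
        have hmem : extSeq (s :: List.ofFn g) s ∈ Cyl (t :: r) :=
          hg.2 (extSeq_mem_cyl _ _)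
        have h1 : extSeq (s :: List.ofFn g) s 0 = t := hmem ⟨0, by simp⟩
        have h2 : extSeq (s :: List.ofFn g) s 0 = s :=
          (mem_cyl_cons_ofFn (extSeq_mem_cyl (s :: List.ofFn g) s)).1
        exact hts (h1.symm.trans h2)
      rw [hempty, Finset.sum_empty]

lemma Hfun_le_Pr_reachWithin [Nonempty S] (s : S) (n : ℕ) :
    Hfun M T n s ≤ M.Pr s (ReachWithin T n) := by
  unfold Pr
  rw [MeasureTheory.OuterMeasure.ofFunction_apply]
  refine le_iInf fun t => le_iInf fun ht => ?_
  refine ENNReal.le_of_forall_pos_le_add fun ε hε hfin => ?_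
  show Hfun M T n s ≤ (∑' i, (if t i = ∅ then 0
      else ⨅ (l : List S) (_ : t i = Cyl l), M.cylWeight s l)) + (ε : ℝ≥0∞)
  have hfin2 : (∑' i, (if t i = ∅ then 0
      else ⨅ (l : List S) (_ : t i = Cyl l), M.cylWeight s l)) < ⊤ := hfin
  set Wi : ℕ → ℝ≥0∞ := fun i => (if t i = ∅ then 0
      else ⨅ (l : List S) (_ : t i = Cyl l), M.cylWeight s l) with hWi
  have hfin' : ∀ i, Wi i < ⊤ := fun i => lt_of_le_of_lt (ENNReal.le_tsum i) hfin2
  have hchoice : ∀ i : ℕ, ∃ l : List S, t i ≠ ∅ →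
      t i = Cyl l ∧ M.cylWeight s l ≤ Wi i + (ε : ℝ≥0∞) * 2⁻¹ ^ (i+1) := by
    intro i
    by_cases hei : t i = ∅
    · exact ⟨[], fun h => absurd hei h⟩
    · have hpos : (ε : ℝ≥0∞) * 2⁻¹ ^ (i+1) ≠ 0 := by
        apply mul_ne_zero
        · exact_mod_cast hε.ne'
        · exact pow_ne_zero _ (ENNReal.inv_ne_zero.2 ENNReal.ofNat_ne_top)
      have hlt : Wi i < Wi i + (ε : ℝ≥0∞) * 2⁻¹ ^ (i+1) :=
        ENNReal.lt_add_right (hfin' i).ne hpos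
      have heq : Wi i = ⨅ (l : List S) (_ : t i = Cyl l), M.cylWeight s l := by
        rw [hWi]; simp only [if_neg hei]
      rw [heq] at hlt
      rw [iInf_lt_iff] at hlt
      obtain ⟨l, hl⟩ := hlt
      rw [iInf_lt_iff] at hl
      obtain ⟨hcy, hw⟩ := hl
      exact ⟨l, fun _ => ⟨hcy, by rw [heq]; exact hw.le⟩⟩
  choose L hL using hchoice
  letI : TopologicalSpace S := ⊥
  haveI : DiscreteTopology S := ⟨rfl⟩
  have hCylOpen : ∀ l : List S, IsOpen (Cyl l) := by
    intro l
    have hrep : Cyl l = ⋂ i : Fin l.length, (fun ω : ℕ → S => ω i.val) ⁻¹' {l.get i} := by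
      ext ω
      simp only [Cyl, Set.mem_iInter, Set.mem_preimage, Set.mem_singleton_iff, Set.mem_setOf_eq]
    rw [hrep]
    exact isOpen_iInter_of_finite fun i =>
      (continuous_apply (i.val : ℕ)).isOpen_preimage _ (isOpen_discrete _)
  set U : ℕ → Set (ℕ → S) := fun i => if t i = ∅ then ∅ else Cyl (L i) with hU
  have hUopen : ∀ i, IsOpen (U i) := by
    intro i
    rw [hU]; simp only
    split
    · exact isOpen_empty
    · exact hCylOpen _
  have hclosed : IsClosed (ReachWithin T n) := by
    have hrep : ReachWithin T n = ⋃ i : Fin (n+1), (fun ω : ℕ → S => ω i.val) ⁻¹' T := by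
      ext ω
      simp only [ReachWithin, Set.mem_iUnion, Set.mem_preimage, Set.mem_setOf_eq]
      constructor
      · rintro ⟨i, hi, hiT⟩; exact ⟨⟨i, by omega⟩, hiT⟩
      · rintro ⟨i, hiT⟩; exact ⟨i.val, by omega, hiT⟩
    rw [hrep]
    exact isClosed_iUnion_of_finite fun i =>
      IsClosed.preimage (continuous_apply (i.val : ℕ)) (isClosed_discrete T)
  have hcpt : IsCompact (ReachWithin T n) := hclosed.isCompact
  have hcov : ReachWithin T n ⊆ ⋃ i, U i := by
    intro ω hω
    obtain ⟨i, hi⟩ := Set.mem_iUnion.1 (ht hω)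
    refine Set.mem_iUnion.2 ⟨i, ?_⟩
    have hne : t i ≠ ∅ := Set.nonempty_iff_ne_empty.1 ⟨ω, hi⟩
    rw [hU]; simp only [if_neg hne]
    rw [← (hL i hne).1]
    exact hi
  obtain ⟨F, hF⟩ := hcpt.elim_finite_subcover U hUopen hcov
  obtain ⟨N, hnN, hLle⟩ : ∃ N, n ≤ N ∧ ∀ i ∈ F, (L i).length ≤ N :=
    ⟨max n (F.sup fun i => (L i).length), le_max_left _ _,
      fun i hi => le_trans (Finset.le_sup (f := fun j => (L j).length) hi) (le_max_right _ _)⟩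
  have hsubR : ∀ g : Fin N → S, (s ∈ T ∨ ∃ i : Fin n, g (Fin.castLE hnN i) ∈ T) →
      Cyl (s :: List.ofFn g) ⊆ ReachWithin T n := by
    intro g hg ω hω
    obtain ⟨hω0, hωs⟩ := mem_cyl_cons_ofFn hω
    rcases hg with hsT | ⟨i, hiT⟩
    · exact ⟨0, Nat.zero_le n, by rw [hω0]; exact hsT⟩
    · refine ⟨i.val + 1, by omega, ?_⟩
      rw [hωs i.val (lt_of_lt_of_le i.2 hnN)]
      exact hiT
  have hassign : ∀ g : Fin N → S, (s ∈ T ∨ ∃ i : Fin n, g (Fin.castLE hnN i) ∈ T) →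
      ∃ i ∈ F, Cyl (s :: List.ofFn g) ⊆ U i := by
    intro g hg
    have hω₀ := extSeq_mem_cyl (s :: List.ofFn g) s
    have hmem : extSeq (s :: List.ofFn g) s ∈ ⋃ i ∈ F, U i := hF (hsubR g hg hω₀)
    rw [Set.mem_iUnion₂] at hmem
    obtain ⟨i, hiF, hiU⟩ := hmem
    refine ⟨i, hiF, ?_⟩
    have hne : t i ≠ ∅ := by
      intro h
      rw [hU] at hiU
      simp only [if_pos h] at hiU
      exact hiU
    have hUeq : U i = Cyl (L i) := by rw [hU]; simp only [if_neg hne]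
    rw [hUeq] at hiU ⊢
    refine cyl_subset_cyl ?_ hω₀ hiU
    have h1 : (L i).length ≤ N := hLle i hiF
    simp only [List.length_cons, List.length_ofFn]
    omega
  have hkey : Hfun M T n s ≤ ∑ i ∈ F, (Wi i + (ε : ℝ≥0∞) * 2⁻¹ ^ (i+1)) := by
    have eq1 : Hfun M T n s = ∑ g : Fin N → S,
        iteSum (s ∈ T ∨ ∃ i : Fin n, g (Fin.castLE hnN i) ∈ T) (M.seqProb N s g) := by
      rw [M.Hfun_eq_sum T n s, toIteSum]
      exact (M.sum_restrict' n (fun f => s ∈ T ∨ ∃ i, f i ∈ T) N hnN s).symm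
    rcases Finset.eq_empty_or_nonempty F with hFe | ⟨i₀, hi₀⟩
    · have hRe : ReachWithin T n = ∅ := by
        refine Set.eq_empty_iff_forall_notMem.2 fun ω hω => ?_
        have hm := hF hω
        rw [hFe] at hm
        simpa using hm
      have hH0 : Hfun M T n s = 0 := by
        rw [eq1]
        refine Finset.sum_eq_zero fun g _ => ?_
        refine iteSum_neg fun hg => ?_
        have hr : extSeq (s :: List.ofFn g) s ∈ ReachWithin T n :=
          hsubR g hg (extSeq_mem_cyl _ _)
        rw [hRe] at hr
        exact hr
      rw [hH0]
      exact zero_le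
    · set φ : (Fin N → S) → ℕ := fun g =>
        if hg : (s ∈ T ∨ ∃ i : Fin n, g (Fin.castLE hnN i) ∈ T)
        then (hassign g hg).choose else i₀ with hφ
      have hmaps : ∀ g : Fin N → S, φ g ∈ F := by
        intro g
        rw [hφ]
        by_cases hg : (s ∈ T ∨ ∃ i : Fin n, g (Fin.castLE hnN i) ∈ T)
        · simp only [dif_pos hg]
          exact (hassign g hg).choose_spec.1
        · simp only [dif_neg hg]
          exact hi₀
      have hφspec : ∀ g : Fin N → S,
          ∀ hg : (s ∈ T ∨ ∃ i : Fin n, g (Fin.castLE hnN i) ∈ T),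
          Cyl (s :: List.ofFn g) ⊆ U (φ g) := by
        intro g hg
        rw [hφ]
        simp only [dif_pos hg]
        exact (hassign g hg).choose_spec.2
      rw [eq1, sum_fiber F φ hmaps]
      refine Finset.sum_le_sum fun i hiF => ?_
      have step1 : ∑ g : Fin N → S,
          iteSum (φ g = i)
            (iteSum (s ∈ T ∨ ∃ j : Fin n, g (Fin.castLE hnN j) ∈ T) (M.seqProb N s g))
          = ∑ g : Fin N → S,
          iteSum (φ g = i ∧ (s ∈ T ∨ ∃ j : Fin n, g (Fin.castLE hnN j) ∈ T))
            (M.seqProb N s g) :=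
        Finset.sum_congr rfl fun g _ => iteSum_iteSum _ _ _
      rw [step1]
      by_cases hne : t i = ∅
      · have hno : ∀ g : Fin N → S,
            ¬(φ g = i ∧ (s ∈ T ∨ ∃ j : Fin n, g (Fin.castLE hnN j) ∈ T)) := by
          rintro g ⟨hφg, hPg⟩
          have hsp := hφspec g hPg
          rw [hφg] at hsp
          have hc := hsp (extSeq_mem_cyl (s :: List.ofFn g) s)
          rw [hU] at hc
          simp only [if_pos hne] at hc
          exact hc
        rw [Finset.sum_eq_zero fun g _ => iteSum_neg (hno g)]
        exact zero_le
      · have hUeq : U i = Cyl (L i) := by rw [hU]; simp only [if_neg hne]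
        have himp : ∀ g : Fin N → S,
            (φ g = i ∧ (s ∈ T ∨ ∃ j : Fin n, g (Fin.castLE hnN j) ∈ T)) →
            Cyl (s :: List.ofFn g) ⊆ Cyl (L i) := by
          rintro g ⟨hφg, hPg⟩
          have hsp := hφspec g hPg
          rw [hφg, hUeq] at hsp
          exact hsp
        refine le_trans (sum_iteSum_le_filter_sum _ _ himp (fun g => M.seqProb N s g)) ?_
        exact le_trans
          (M.sum_subset_cyl_le s N (L i) (le_trans (hLle i hiF) (Nat.le_succ N)))
          (hL i hne).2

  have hgeo : ∑' i : ℕ, (ε : ℝ≥0∞) * 2⁻¹ ^ (i+1) = (ε : ℝ≥0∞) := by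
    rw [ENNReal.tsum_mul_left]
    have h1 : ∑' i : ℕ, (2⁻¹ : ℝ≥0∞) ^ (i+1) = 1 := by
      simp only [pow_succ']
      rw [ENNReal.tsum_mul_left, ENNReal.tsum_geometric, ENNReal.one_sub_inv_two, inv_inv]
      exact ENNReal.inv_mul_cancel (by norm_num) (by norm_num)
    rw [h1, mul_one]
  calc Hfun M T n s ≤ ∑ i ∈ F, (Wi i + (ε : ℝ≥0∞) * 2⁻¹ ^ (i+1)) := hkey
    _ = (∑ i ∈ F, Wi i) + ∑ i ∈ F, (ε : ℝ≥0∞) * 2⁻¹ ^ (i+1) := Finset.sum_add_distrib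
    _ ≤ (∑' i, Wi i) + ∑' i : ℕ, (ε : ℝ≥0∞) * 2⁻¹ ^ (i+1) :=
        add_le_add (ENNReal.sum_le_tsum F) (ENNReal.sum_le_tsum F)
    _ = (∑' i, Wi i) + (ε : ℝ≥0∞) := by rw [hgeo]

end MarkovChain
end Aux

/-- In a finite Markov chain with `ℓ = |S|` states in which every state
has a path to `T`, with `α > 0` the minimum positive transition probability: from
every start state, `T` is reached within `ℓ` steps with probability at least `α ^ ℓ`,
`T` is avoided for `k·ℓ` steps with probability at most `(1 - α ^ ℓ) ^ k`, and `T` is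
reached with probability 1. -/
theorem stmt4 {S : Type*} [Fintype S] [DecidableEq S] (M : MarkovChain S) (T : Set S)
    (hT : ∀ s : S, ∃ t ∈ T, M.Reaches s t)
    (α : ℝ≥0∞) (hα0 : 0 < α)
    (hα : IsLeast {x : ℝ≥0∞ | ∃ s t, t ∈ M.E s ∧ M.δ s t = x} α) :
    ∀ s : S,
      α ^ (Fintype.card S) ≤ M.Pr s (ReachWithin T (Fintype.card S)) ∧
      (∀ k : ℕ, M.Pr s {ω : ℕ → S | ∀ i ≤ k * Fintype.card S, ω i ∉ T}
        ≤ (1 - α ^ (Fintype.card S)) ^ k) ∧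
      M.Pr s (ReachEvent T) = 1 := by
  classical
  intro s
  haveI : Nonempty S := ⟨s⟩
  have hℓpos : 1 ≤ Fintype.card S := Fintype.card_pos
  have hα1 : α ≤ 1 := by
    obtain ⟨u, v, hvE, hδ⟩ := hα.1
    rw [← hδ, ← M.δ_sum u]
    exact Finset.single_le_sum (f := fun w => M.δ u w)
      (fun _ _ => zero_le) (Finset.mem_univ v)
  have hαle : ∀ u v, v ∈ M.E u → α ≤ M.δ u v := fun u v hv => hα.2 ⟨u, v, hv, rfl⟩
  have hHit : ∀ u : S, α ^ (Fintype.card S) ≤ M.Hfun T (Fintype.card S) u := by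
    intro u
    obtain ⟨tg, htgT, hreach⟩ := hT u
    obtain ⟨n, hn⟩ := M.mem_Rset_of_reaches T htgT hreach
    have hu' : u ∈ M.Rset T (Fintype.card S - 1) := M.mem_Rset_pred T ⟨tg, htgT⟩ hn
    exact M.pow_le_Hfun T α hα1 hαle (Fintype.card S - 1) u hu' (Fintype.card S) (by omega)
  have hAv : ∀ v, v ∉ T → M.Afun T (Fintype.card S) v ≤ 1 - α ^ (Fintype.card S) :=
    fun v hv => M.Afun_le_one_sub T hv (hHit v)
  have hAvk : ∀ k, ∀ u, u ∉ T →
      M.Afun T (k * Fintype.card S) u ≤ (1 - α ^ (Fintype.card S)) ^ k :=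
    M.Afun_pow T (Fintype.card S) _ hAv
  refine ⟨?_, ?_, ?_⟩
  · exact le_trans (hHit s) (M.Hfun_le_Pr_reachWithin T s (Fintype.card S))
  · intro k
    refine le_trans (M.Pr_avoid_le T s (k * Fintype.card S)) ?_
    by_cases hs : s ∈ T
    · rw [if_pos hs]
      exact zero_le
    · rw [if_neg hs]
      exact hAvk k s hs
  · refine le_antisymm (M.Pr_le_one s _) ?_
    have hstep : ∀ k : ℕ,
        1 - (1 - α ^ (Fintype.card S)) ^ k ≤ M.Pr s (ReachEvent T) := by
      intro k
      have h1 : M.Pr s (ReachWithin T (k * Fintype.card S)) ≤ M.Pr s (ReachEvent T) :=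
        M.Pr_mono s (fun ω hω => by
          obtain ⟨i, _, hi⟩ := hω
          exact ⟨i, hi⟩)
      refine le_trans ?_
        (le_trans (M.Hfun_le_Pr_reachWithin T s (k * Fintype.card S)) h1)
      by_cases hs : s ∈ T
      · rw [M.Hfun_mem T _ s hs]
        exact tsub_le_self
      · have hAH := M.Afun_add_Hfun T (k * Fintype.card S) s hs
        have hA1 : M.Afun T (k * Fintype.card S) s ≤ 1 := M.Afun_le_one T _ s
        have hAne : M.Afun T (k * Fintype.card S) s ≠ ⊤ :=
          (lt_of_le_of_lt hA1 ENNReal.one_lt_top).ne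
        have hH : M.Hfun T (k * Fintype.card S) s
            = 1 - M.Afun T (k * Fintype.card S) s := by
          refine ENNReal.eq_sub_of_add_eq hAne ?_
          rw [add_comm]
          exact hAH
        calc 1 - (1 - α ^ (Fintype.card S)) ^ k
            ≤ 1 - M.Afun T (k * Fintype.card S) s := tsub_le_tsub_left (hAvk k s hs) 1
          _ = M.Hfun T (k * Fintype.card S) s := hH.symm
    refine ENNReal.le_of_forall_pos_le_add fun ε hε hlt => ?_
    have hlt1 : (1 : ℝ≥0∞) - α ^ (Fintype.card S) < 1 :=
      ENNReal.sub_lt_self (by norm_num) (by norm_num) (pow_ne_zero _ hα0.ne')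
    have htend := ENNReal.tendsto_pow_atTop_nhds_zero_of_lt_one hlt1
    have hev : ∀ᶠ k in Filter.atTop,
        (1 - α ^ (Fintype.card S)) ^ k < (ε : ℝ≥0∞) :=
      htend.eventually_lt_const (by exact_mod_cast hε)
    obtain ⟨k, hk⟩ := hev.exists
    have h2 : (1 : ℝ≥0∞) ≤ M.Pr s (ReachEvent T) + (1 - α ^ (Fintype.card S)) ^ k := by
      rw [← tsub_le_iff_right]
      exact hstep k
    exact le_trans h2 (add_le_add_right hk.le _)
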